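/- arXiv:1412.8546 — 3 statements merged into one kernel-verified Lean document; each statement's English description precedes it below -/
import Mathlib

section
/- If R is an equivalence relation on Con, then the lifting of R to finite-support probability distributions via weight functions is an equivalence relation on the set of finite-support distributions on Con. -/
/-!
Reflexivity and symmetry are witnessed by the diagonal weight `δ c d = [c = d] μ c` and by the
transposed weight. For transitivity, weights `δ₁` for `(μ, ν)` and `δ₂` for `(ν, ρ)` are glued
along `ν`: `δ c e = ∑_{ν d ≠ 0} δ₁ c d δ₂ d e / ν d`. Summing over `e` replaces `δ₂ d e / ν d` by
`1`, so the first marginal is that of `δ₁`, and the second follows by transposing; `δ c e > 0`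
forces a `d` with `δ₁ c d > 0` and `δ₂ d e > 0`, hence `R c d` and `R d e`.
-/

/-- A finite-support probability distribution. -/
structure FDist (Con : Type*) where
  toFun : Con → ℝ
  nonneg : ∀ c, 0 ≤ toFun c
  finite : (Function.support toFun).Finite
  sum_one : ∑ᶠ c, toFun c = 1

/-- `δ` is a weight function for `(μ, ν)` w.r.t. the relation `R`. -/
def IsWeight {Con : Type*} (R : Con → Con → Prop) (μ ν : FDist Con)
    (δ : Con → Con → ℝ) : Prop :=
  (∀ c d, 0 ≤ δ c d ∧ δ c d ≤ 1) ∧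
  (Function.support (Function.uncurry δ)).Finite ∧
  (∀ c, ∑ᶠ d, δ c d = μ.toFun c) ∧
  (∀ d, ∑ᶠ c, δ c d = ν.toFun d) ∧
  (∀ c d, 0 < δ c d → R c d)

/-- The lifting of a relation to finite-support distributions via weight functions. -/
def Lift {Con : Type*} (R : Con → Con → Prop) (μ ν : FDist Con) : Prop :=
  ∃ δ, IsWeight R μ ν δ

/-- The point (Dirac) distribution at `c`. -/
noncomputable def pointDist {Con : Type*} [DecidableEq Con] (c : Con) : FDist Con where
  toFun x := if x = c then 1 else 0
  nonneg x := by (try dsimp); split <;> norm_num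
  finite := Set.Finite.subset (Set.finite_singleton c) (fun x hx => by
    by_contra h
    simp only [Function.mem_support] at hx
    simp only [Set.mem_singleton_iff] at h
    simp [h] at hx)
  sum_one := by
    rw [finsum_eq_single _ c]
    · simp
    · intro x hx; simp [hx]

open Function

section

variable {Con : Type*}

lemma FDist.toFun_le_one (μ : FDist Con) (c : Con) : μ.toFun c ≤ 1 :=
  μ.sum_one ▸ single_le_finsum c μ.finite μ.nonneg

lemma support_uncurry_finite_left {δ : Con → Con → ℝ} (h : (support (uncurry δ)).Finite)
    (c : Con) : (support (δ c)).Finite :=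
  (h.image Prod.snd).subset fun d hd => ⟨(c, d), hd, rfl⟩

lemma support_uncurry_finite_right {δ : Con → Con → ℝ} (h : (support (uncurry δ)).Finite)
    (d : Con) : (support (δ · d)).Finite :=
  (h.image Prod.fst).subset fun c hc => ⟨(c, d), hc, rfl⟩

noncomputable def weightComp (ν : FDist Con) (δ₁ δ₂ : Con → Con → ℝ) (c e : Con) : ℝ :=
  ∑ d ∈ ν.finite.toFinset, δ₁ c d * δ₂ d e / ν.toFun d

lemma weightComp_flip (ν : FDist Con) (δ₁ δ₂ : Con → Con → ℝ) :
    flip (weightComp ν δ₁ δ₂) = weightComp ν (flip δ₂) (flip δ₁) := by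
  ext e c
  simp only [flip, weightComp, mul_comm]

namespace IsWeight

variable {R S : Con → Con → Prop} {μ ν ρ : FDist Con} {δ δ₁ δ₂ : Con → Con → ℝ}

lemma of_marginals (h0 : ∀ c d, 0 ≤ δ c d) (hfin : (support (uncurry δ)).Finite)
    (hμ : ∀ c, ∑ᶠ d, δ c d = μ.toFun c) (hν : ∀ d, ∑ᶠ c, δ c d = ν.toFun d)
    (hR : ∀ c d, 0 < δ c d → R c d) : IsWeight R μ ν δ := by
  refine ⟨fun c d => ⟨h0 c d, ?_⟩, hfin, hμ, hν, hR⟩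
  calc δ c d ≤ ∑ᶠ d, δ c d := single_le_finsum d (support_uncurry_finite_left hfin c) (h0 c)
    _ = μ.toFun c := hμ c
    _ ≤ 1 := μ.toFun_le_one c

lemma nonneg (h : IsWeight R μ ν δ) (c d : Con) : 0 ≤ δ c d := (h.1 c d).1

lemma finsum_left (h : IsWeight R μ ν δ) (c : Con) : ∑ᶠ d, δ c d = μ.toFun c := h.2.2.1 c

lemma finsum_right (h : IsWeight R μ ν δ) (d : Con) : ∑ᶠ c, δ c d = ν.toFun d := h.2.2.2.1 d

lemma rel (h : IsWeight R μ ν δ) {c d : Con} (hcd : 0 < δ c d) : R c d := h.2.2.2.2 c d hcd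

lemma mono (h : IsWeight R μ ν δ) (hRS : ∀ c d, R c d → S c d) : IsWeight S μ ν δ :=
  ⟨h.1, h.2.1, h.2.2.1, h.2.2.2.1, fun c d hcd => hRS c d (h.rel hcd)⟩

lemma flip (h : IsWeight R μ ν δ) : IsWeight (flip R) ν μ (flip δ) := by
  refine of_marginals (fun d c => h.nonneg c d) ?_ h.finsum_right h.finsum_left
    fun d c => h.rel
  exact (h.2.1.image Prod.swap).subset fun p hp => ⟨p.swap, hp, rfl⟩

lemma le_right (h : IsWeight R μ ν δ) (c d : Con) : δ c d ≤ ν.toFun d :=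
  h.finsum_right d ▸ single_le_finsum c (support_uncurry_finite_right h.2.1 d) (h.nonneg · d)

lemma le_left (h : IsWeight R μ ν δ) (c d : Con) : δ c d ≤ μ.toFun c :=
  h.flip.le_right d c

lemma support_right_subset (h : IsWeight R μ ν δ) (c : Con) :
    support (δ c) ⊆ support ν.toFun := fun d hd =>
  ((lt_of_le_of_ne (h.nonneg c d) (Ne.symm hd)).trans_le (h.le_right c d)).ne'

lemma diag [DecidableEq Con] (μ : FDist Con) :
    IsWeight Eq μ μ (fun c d => if c = d then μ.toFun c else 0) := by
  refine of_marginals (fun c d => ?_) ?_ (fun c => ?_) (fun d => ?_) (fun c d h => ?_)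
  · split_ifs <;> simp [μ.nonneg]
  · refine (μ.finite.image fun c => (c, c)).subset fun ⟨c, d⟩ hcd => ?_
    obtain rfl : c = d := by by_contra hne; simp [hne] at hcd
    exact ⟨c, by simpa using hcd, rfl⟩
  · rw [finsum_eq_single _ c fun d hd => if_neg hd.symm, if_pos rfl]
  · rw [finsum_eq_single _ d fun c hc => if_neg hc, if_pos rfl]
  · by_contra hne; simp [hne] at h

lemma exists_pos_of_weightComp_ne_zero (h₁ : IsWeight R μ ν δ₁) (h₂ : IsWeight S ν ρ δ₂)
    {c e : Con} (hce : weightComp ν δ₁ δ₂ c e ≠ 0) : ∃ d, 0 < δ₁ c d ∧ 0 < δ₂ d e := by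
  obtain ⟨d, -, hd⟩ := Finset.exists_ne_zero_of_sum_ne_zero hce
  rw [div_ne_zero_iff, mul_ne_zero_iff] at hd
  exact ⟨d, (h₁.nonneg c d).lt_of_ne' hd.1.1, (h₂.nonneg d e).lt_of_ne' hd.1.2⟩

lemma finsum_weightComp_left (h₁ : IsWeight R μ ν δ₁) (h₂ : IsWeight S ν ρ δ₂) (c : Con) :
    ∑ᶠ e, weightComp ν δ₁ δ₂ c e = μ.toFun c := by
  have hsupp : support (weightComp ν δ₁ δ₂ c) ⊆ ρ.finite.toFinset := fun e he => by
    obtain ⟨d, -, hde⟩ := h₁.exists_pos_of_weightComp_ne_zero h₂ he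
    simpa using h₂.support_right_subset d hde.ne'
  rw [finsum_eq_sum_of_support_subset _ hsupp, ← h₁.finsum_left c,
    finsum_eq_sum_of_support_subset (s := ν.finite.toFinset) _
      (by simpa using h₁.support_right_subset c)]
  unfold weightComp
  rw [Finset.sum_comm]
  refine Finset.sum_congr rfl fun d hd => ?_
  have hν : ν.toFun d ≠ 0 := by simpa using hd
  calc ∑ e ∈ ρ.finite.toFinset, δ₁ c d * δ₂ d e / ν.toFun d
      = δ₁ c d / ν.toFun d * ∑ e ∈ ρ.finite.toFinset, δ₂ d e := by
        rw [Finset.mul_sum]; simp only [mul_div_right_comm]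
    _ = δ₁ c d := by
        rw [← finsum_eq_sum_of_support_subset _ (by simpa using h₂.support_right_subset d),
          h₂.finsum_left, div_mul_cancel₀ _ hν]

lemma comp (h₁ : IsWeight R μ ν δ₁) (h₂ : IsWeight S ν ρ δ₂) :
    IsWeight (Relation.Comp R S) μ ρ (weightComp ν δ₁ δ₂) := by
  refine of_marginals (fun c e => ?_) ?_ (h₁.finsum_weightComp_left h₂) (fun e => ?_)
    fun c e hce => ?_
  · exact Finset.sum_nonneg fun d _ =>
      div_nonneg (mul_nonneg (h₁.nonneg c d) (h₂.nonneg d e)) (ν.nonneg d)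
  · refine (μ.finite.prod ρ.finite).subset fun ⟨c, e⟩ hce => ?_
    obtain ⟨d, hcd, hde⟩ := h₁.exists_pos_of_weightComp_ne_zero h₂ hce
    exact ⟨(hcd.trans_le (h₁.le_left c d)).ne', (hde.trans_le (h₂.le_right d e)).ne'⟩
  · rw [← h₂.flip.finsum_weightComp_left h₁.flip e, ← weightComp_flip]
    rfl
  · obtain ⟨d, hcd, hde⟩ := h₁.exists_pos_of_weightComp_ne_zero h₂ hce.ne'
    exact ⟨d, h₁.rel hcd, h₂.rel hde⟩

end IsWeight

namespace Lift

variable {R S : Con → Con → Prop} {μ ν ρ : FDist Con}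

lemma mono (h : Lift R μ ν) (hRS : ∀ c d, R c d → S c d) : Lift S μ ν :=
  let ⟨δ, hδ⟩ := h; ⟨δ, hδ.mono hRS⟩

lemma eq_self (μ : FDist Con) : Lift Eq μ μ := by
  classical
  exact ⟨_, IsWeight.diag μ⟩

lemma flip (h : Lift R μ ν) : Lift (flip R) ν μ :=
  let ⟨_, hδ⟩ := h; ⟨_, hδ.flip⟩

lemma comp (h₁ : Lift R μ ν) (h₂ : Lift S ν ρ) : Lift (Relation.Comp R S) μ ρ :=
  let ⟨_, hδ₁⟩ := h₁; let ⟨_, hδ₂⟩ := h₂; ⟨_, hδ₁.comp hδ₂⟩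

end Lift

end

/-- If `R` is an equivalence relation, so is its lifting via weight functions. -/
theorem lift_equivalence {Con : Type*} (R : Con → Con → Prop)
    (hR : Equivalence R) :
    Equivalence (Lift R) :=
  ⟨fun μ => (Lift.eq_self μ).mono fun c _ h => h ▸ hR.refl c,
    fun h => h.flip.mono fun _ _ => hR.symm,
    fun h₁ h₂ => (h₁.comp h₂).mono fun _ _ ⟨_, hab, hbc⟩ => hR.trans hab hbc⟩
end

section
/- The weak internal transition relation ⟹ on finite-support distributions is transitive: if μ ⟹ ν and ν ⟹ ξ then μ ⟹ ξ. -/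
/-- A probabilistic labeled transition system with a distinguished silent action `τ`. -/
structure PLTS (Con Act : Type*) where
  trans : Con → Act → FDist Con → Prop
  tau : Act

/-- The weak internal transition relation `⟹` on finite-support distributions:
the smallest relation such that (1) `δ_C ⟹ δ_C`; (2) if `C →τ μ` and `μ ⟹ ν`
then `δ_C ⟹ ν`; (3) closure under convex combinations of point decompositions. -/
inductive Weak {Con Act : Type*} [DecidableEq Con] (L : PLTS Con Act) :
    FDist Con → FDist Con → Prop
  | refl (C : Con) : Weak L (pointDist C) (pointDist C)
  | step {C : Con} {μ ν : FDist Con} :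
      L.trans C L.tau μ → Weak L μ ν → Weak L (pointDist C) ν
  | mix {n : ℕ} (p : Fin n → ℝ) (C : Fin n → Con) (ν : Fin n → FDist Con)
      (μ ξ : FDist Con)
      (hp : ∀ i, 0 ≤ p i) (hs : ∑ i, p i = 1)
      (hμ : ∀ x, μ.toFun x = ∑ i, if C i = x then p i else 0)
      (hν : ∀ i, Weak L (pointDist (C i)) (ν i))
      (hξ : ∀ x, ξ.toFun x = ∑ i, p i * (ν i).toFun x) :
      Weak L μ ξ

/-! By induction on `μ ⟹ ν`, transitivity reduces to a decomposition property: if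
`μ = ∑ pᵢ νᵢ` and `μ ⟹ ξ`, then `ξ = ∑ pᵢ ρᵢ` with `νᵢ ⟹ ρᵢ`. When `μ = δ_C`, every `νᵢ`
with `pᵢ > 0` is `δ_C` itself. When `μ = ∑ⱼ qⱼ δ_{Dⱼ}` derives `∑ⱼ qⱼ ρⱼ`, each such `νᵢ` has a
density `νᵢ / μ` with respect to `μ`, so it derives `∑ⱼ qⱼ (νᵢ(Dⱼ) / μ(Dⱼ)) ρⱼ`, and these
recombine with the weights `pᵢ` to `∑ⱼ qⱼ ρⱼ`. -/

namespace FDist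

variable {Con : Type*}

theorem ext {μ ν : FDist Con} (h : ∀ x, μ.toFun x = ν.toFun x) : μ = ν := by
  cases μ; cases ν
  congr
  exact funext h

theorem sum_eq_one (μ : FDist Con) {s : Finset Con} (h : Function.support μ.toFun ⊆ s) :
    ∑ x ∈ s, μ.toFun x = 1 := by
  rw [← finsum_eq_finsetSum_of_support_subset _ h, μ.sum_one]

theorem toFun_eq_zero_of_mix {n : ℕ} {p : Fin n → ℝ} {ν : Fin n → FDist Con} {μ : FDist Con}
    (hp : ∀ i, 0 ≤ p i) (hμ : ∀ x, μ.toFun x = ∑ i, p i * (ν i).toFun x)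
    {i : Fin n} (hi : 0 < p i) {x : Con} (hx : μ.toFun x = 0) : (ν i).toFun x = 0 := by
  rw [hμ, Finset.sum_eq_zero_iff_of_nonneg fun k _ => mul_nonneg (hp k) ((ν k).nonneg x)] at hx
  exact (mul_eq_zero.mp (hx i (Finset.mem_univ i))).resolve_left hi.ne'

variable [DecidableEq Con]

theorem exists_sum_pointDist (μ : FDist Con) :
    ∃ (n : ℕ) (p : Fin n → ℝ) (C : Fin n → Con), (∀ i, 0 ≤ p i) ∧ ∑ i, p i = 1 ∧
      ∀ x, μ.toFun x = ∑ i, if C i = x then p i else 0 := by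
  set S := μ.finite.toFinset
  have sum_enum : ∀ f : Con → ℝ, ∑ i, f (S.equivFin.symm i) = ∑ c ∈ S, f c := fun f => by
    rw [Equiv.sum_comp S.equivFin.symm (fun c => f c), Finset.sum_coe_sort]
  refine ⟨S.card, fun i => μ.toFun (S.equivFin.symm i), fun i => S.equivFin.symm i,
    fun i => μ.nonneg _, ?_, fun x => ?_⟩
  · rw [sum_enum μ.toFun, μ.sum_eq_one (by simp [S])]
  · rw [sum_enum fun c => if c = x then μ.toFun c else 0, Finset.sum_ite_eq']
    split_ifs with hx
    · rfl
    · simpa [S] using hx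

theorem le_toFun_of_sum_pointDist {m : ℕ} {q : Fin m → ℝ} {D : Fin m → Con} {μ : FDist Con}
    (hq : ∀ j, 0 ≤ q j) (hμ : ∀ x, μ.toFun x = ∑ j, if D j = x then q j else 0) (j : Fin m) :
    q j ≤ μ.toFun (D j) := by
  rw [hμ]
  simpa using Finset.single_le_sum (f := fun k => if D k = D j then q k else 0)
    (fun k _ => by split_ifs <;> simp [hq k]) (Finset.mem_univ j)

theorem sum_mul_eq_finsum {m : ℕ} {q : Fin m → ℝ} {D : Fin m → Con} {μ : FDist Con}
    (hμ : ∀ x, μ.toFun x = ∑ j, if D j = x then q j else 0) (f : Con → ℝ) :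
    ∑ j, q j * f (D j) = ∑ᶠ x, μ.toFun x * f x := by
  rw [← finsum_sum_filter D]
  refine finsum_congr fun x => ?_
  rw [hμ, ← Finset.sum_filter, Finset.sum_mul]
  exact Finset.sum_congr rfl fun j hj => by rw [(Finset.mem_filter.mp hj).2]

end FDist

section Weak

variable {Con Act : Type*}

noncomputable def mixDist {m : ℕ} (w : Fin m → ℝ) (ρ : Fin m → FDist Con)
    (hw : ∀ j, 0 ≤ w j) (hs : ∑ j, w j = 1) : FDist Con where
  toFun x := ∑ j, w j * (ρ j).toFun x
  nonneg x := Finset.sum_nonneg fun j _ => mul_nonneg (hw j) ((ρ j).nonneg x)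
  finite := by
    refine (Set.finite_iUnion fun j => (ρ j).finite).subset fun x hx => ?_
    contrapose! hx
    simp_all
  sum_one := by
    rw [finsum_sum_comm _ _ fun j _ => (ρ j).finite.subset fun x hx => by
      simp_all]
    simp_rw [← mul_finsum, FDist.sum_one, mul_one, hs]

variable [DecidableEq Con] {L : PLTS Con Act}

theorem eq_pointDist_of_mix {n : ℕ} {p : Fin n → ℝ} {ν : Fin n → FDist Con} {C : Con}
    (hp : ∀ i, 0 ≤ p i) (hC : ∀ x, (pointDist C).toFun x = ∑ i, p i * (ν i).toFun x)
    {i : Fin n} (hi : 0 < p i) : ν i = pointDist C := by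
  have off_C : ∀ x, x ≠ C → (ν i).toFun x = 0 := fun x hx =>
    FDist.toFun_eq_zero_of_mix hp hC hi (by simp [pointDist, hx])
  have at_C : (ν i).toFun C = 1 := by
    rw [← (ν i).sum_one, finsum_eq_single _ C off_C]
  refine FDist.ext fun x => ?_
  by_cases hx : x = C
  · subst hx; simp [pointDist, at_C]
  · simp [pointDist, hx, off_C x hx]

theorem weak_refl (L : PLTS Con Act) (μ : FDist Con) : Weak L μ μ := by
  obtain ⟨n, p, C, hp, hs, hμ⟩ := μ.exists_sum_pointDist
  refine Weak.mix p C (fun i => pointDist (C i)) μ μ hp hs hμ (fun i => .refl _) fun x => ?_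
  rw [hμ]
  refine Finset.sum_congr rfl fun i _ => ?_
  simp [pointDist, eq_comm]

theorem exists_weak_mix_of_pos {n : ℕ} {p : Fin n → ℝ} {ν : Fin n → FDist Con} {ξ : FDist Con}
    (hp : ∀ i, 0 ≤ p i) (f : Fin n → Con → ℝ)
    (hf : ∀ i, 0 < p i → ∃ ρ, Weak L (ν i) ρ ∧ ∀ x, ρ.toFun x = f i x)
    (hξ : ∀ x, ξ.toFun x = ∑ i, p i * f i x) :
    ∃ ρ : Fin n → FDist Con, (∀ i, Weak L (ν i) (ρ i)) ∧
      ∀ x, ξ.toFun x = ∑ i, p i * (ρ i).toFun x := by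
  have : ∀ i, ∃ ρ, Weak L (ν i) ρ ∧ (0 < p i → ∀ x, ρ.toFun x = f i x) := fun i => by
    by_cases hi : 0 < p i
    · obtain ⟨ρ, hρ, hρf⟩ := hf i hi
      exact ⟨ρ, hρ, fun _ => hρf⟩
    · exact ⟨ν i, weak_refl L (ν i), fun h => absurd h hi⟩
  choose ρ hρ hρf using this
  refine ⟨ρ, hρ, fun x => ?_⟩
  rw [hξ]
  refine Finset.sum_congr rfl fun i _ => ?_
  rcases (hp i).eq_or_lt with hi | hi
  · simp [← hi]
  · rw [hρf i hi]

theorem exists_weak_mix_of_pointDist {C : Con} {ξ : FDist Con} (h : Weak L (pointDist C) ξ)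
    {n : ℕ} {p : Fin n → ℝ} {ν : Fin n → FDist Con} (hp : ∀ i, 0 ≤ p i) (hs : ∑ i, p i = 1)
    (hC : ∀ x, (pointDist C).toFun x = ∑ i, p i * (ν i).toFun x) :
    ∃ ρ : Fin n → FDist Con, (∀ i, Weak L (ν i) (ρ i)) ∧
      ∀ x, ξ.toFun x = ∑ i, p i * (ρ i).toFun x :=
  exists_weak_mix_of_pos hp (fun _ => ξ.toFun)
    (fun _ hi => ⟨ξ, eq_pointDist_of_mix hp hC hi ▸ h, fun _ => rfl⟩)
    (fun x => by rw [← Finset.sum_mul, hs, one_mul])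

theorem exists_weak_of_density {m : ℕ} {q : Fin m → ℝ} {D : Fin m → Con} {ρ : Fin m → FDist Con}
    {μ : FDist Con} (hq : ∀ j, 0 ≤ q j) (hμ : ∀ x, μ.toFun x = ∑ j, if D j = x then q j else 0)
    (hρ : ∀ j, Weak L (pointDist (D j)) (ρ j))
    {ν : FDist Con} {g : Con → ℝ} (hg : ∀ x, 0 ≤ g x) (hν : ∀ x, ν.toFun x = μ.toFun x * g x) :
    ∃ ρ', Weak L ν ρ' ∧ ∀ x, ρ'.toFun x = ∑ j, q j * g (D j) * (ρ j).toFun x := by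
  have hw : ∀ j, 0 ≤ q j * g (D j) := fun j => mul_nonneg (hq j) (hg _)
  have hs : ∑ j, q j * g (D j) = 1 := by
    rw [FDist.sum_mul_eq_finsum hμ, ← ν.sum_one]
    exact finsum_congr fun x => (hν x).symm
  refine ⟨mixDist _ ρ hw hs, Weak.mix _ D ρ ν _ hw hs (fun x => ?_) hρ fun _ => rfl, fun _ => rfl⟩
  rw [hν, hμ, Finset.sum_mul]
  refine Finset.sum_congr rfl fun j _ => ?_
  split_ifs with h <;> simp [h]

theorem exists_weak_mix_of_sum_pointDist {m : ℕ} {q : Fin m → ℝ} {D : Fin m → Con}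
    {ρ : Fin m → FDist Con} {μ ξ : FDist Con} (hq : ∀ j, 0 ≤ q j)
    (hμ : ∀ x, μ.toFun x = ∑ j, if D j = x then q j else 0)
    (hρ : ∀ j, Weak L (pointDist (D j)) (ρ j)) (hξ : ∀ x, ξ.toFun x = ∑ j, q j * (ρ j).toFun x)
    {n : ℕ} {p : Fin n → ℝ} {ν : Fin n → FDist Con} (hp : ∀ i, 0 ≤ p i)
    (hν : ∀ x, μ.toFun x = ∑ i, p i * (ν i).toFun x) :
    ∃ ρ' : Fin n → FDist Con, (∀ i, Weak L (ν i) (ρ' i)) ∧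
      ∀ x, ξ.toFun x = ∑ i, p i * (ρ' i).toFun x := by
  set g : Fin n → Con → ℝ := fun i x => (ν i).toFun x / μ.toFun x
  refine exists_weak_mix_of_pos hp (fun i x => ∑ j, q j * g i (D j) * (ρ j).toFun x)
    (fun i hi => exists_weak_of_density hq hμ hρ
      (fun x => div_nonneg ((ν i).nonneg x) (μ.nonneg x)) fun x => ?_) fun x => ?_
  · rcases eq_or_ne (μ.toFun x) 0 with hx | hx
    · simp [hx, FDist.toFun_eq_zero_of_mix hp hν hi hx]
    · exact (mul_div_cancel₀ _ hx).symm
  · -- where `μ (D j) = 0` the junk value `0 / 0 = 0` is harmless, since then `q j = 0`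
    have weight : ∀ j, q j * ∑ i, p i * g i (D j) = q j := fun j => by
      simp_rw [g, ← mul_div_assoc, ← Finset.sum_div, ← hν]
      rcases eq_or_ne (μ.toFun (D j)) 0 with h0 | h0
      · simp [le_antisymm (h0 ▸ FDist.le_toFun_of_sum_pointDist hq hμ j) (hq j)]
      · rw [div_self h0, mul_one]
    simp_rw [hξ, Finset.mul_sum]
    rw [Finset.sum_comm]
    refine Finset.sum_congr rfl fun j _ => ?_
    calc q j * (ρ j).toFun x = (q j * ∑ i, p i * g i (D j)) * (ρ j).toFun x := by rw [weight j]
      _ = _ := by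
        rw [Finset.mul_sum, Finset.sum_mul]
        exact Finset.sum_congr rfl fun i _ => by ring

theorem Weak.exists_mix {μ ξ : FDist Con} (h : Weak L μ ξ) {n : ℕ} {p : Fin n → ℝ}
    {ν : Fin n → FDist Con} (hp : ∀ i, 0 ≤ p i) (hs : ∑ i, p i = 1)
    (hν : ∀ x, μ.toFun x = ∑ i, p i * (ν i).toFun x) :
    ∃ ρ : Fin n → FDist Con, (∀ i, Weak L (ν i) (ρ i)) ∧
      ∀ x, ξ.toFun x = ∑ i, p i * (ρ i).toFun x := by
  cases h with
  | refl C => exact exists_weak_mix_of_pointDist (.refl C) hp hs hν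
  | step htr hw => exact exists_weak_mix_of_pointDist (.step htr hw) hp hs hν
  | mix q D ρ _ _ hq _ hμ hρ hξ => exact exists_weak_mix_of_sum_pointDist hq hμ hρ hξ hp hν

end Weak

/-- The weak internal transition relation `⟹` is transitive. -/
theorem weak_trans {Con Act : Type*} [DecidableEq Con] (L : PLTS Con Act)
    (μ ν ξ : FDist Con) (h1 : Weak L μ ν) (h2 : Weak L ν ξ) : Weak L μ ξ := by
  induction h1 generalizing ξ with
  | refl C => exact h2
  | step htr _ ih => exact Weak.step htr (ih ξ h2)
  | mix p C _ μ' _ hp hs hμ _ hξ ih =>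
    obtain ⟨ρ, hρ, hsum⟩ := h2.exists_mix hp hs hξ
    exact Weak.mix p C ρ μ' ξ hp hs hμ (fun i => ih i (ρ i) (hρ i)) hsum
end

section
/- The weak internal transition relation ⟹ is closed under convex combinations: if μ_j ⟹ ν_j for j in a finite index set J and ∑_j q_j = 1 with q_j ≥ 0, then ∑_j q_j μ_j ⟹ ∑_j q_j ν_j. -/
/-! Every weak transition is a `mix` (`refl` and `step` being one-point mixes), so a convex
combination of weak transitions `μ_j ⟹ ν_j`, decomposed as `μ_j = ∑_i p_{ji} δ_{C_{ji}}`, is a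
single `mix` indexed by the pairs `(j, i)` with weights `q_j p_{ji}`. -/

namespace Weak

variable {Con Act : Type*} [DecidableEq Con] {L : PLTS Con Act}

theorem mix_fintype {ι : Type*} [Fintype ι] (p : ι → ℝ) (C : ι → Con) (ν : ι → FDist Con)
    (μ ξ : FDist Con) (hp : ∀ i, 0 ≤ p i) (hs : ∑ i, p i = 1)
    (hμ : ∀ x, μ.toFun x = ∑ i, if C i = x then p i else 0)
    (hν : ∀ i, Weak L (pointDist (C i)) (ν i))
    (hξ : ∀ x, ξ.toFun x = ∑ i, p i * (ν i).toFun x) :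
    Weak L μ ξ := by
  let e := (Fintype.equivFin ι).symm
  refine Weak.mix (p ∘ e) (C ∘ e) (ν ∘ e) μ ξ (fun _ => hp _) ?_ ?_ (fun _ => hν _) ?_
  · rwa [← e.sum_comp p] at hs
  · intro x
    rw [hμ x]
    exact (e.sum_comp fun i => if C i = x then p i else 0).symm
  · intro x
    rw [hξ x]
    exact (e.sum_comp fun i => p i * (ν i).toFun x).symm

theorem exists_point_decomposition {μ ν : FDist Con} (h : Weak L μ ν) :
    ∃ (n : ℕ) (p : Fin n → ℝ) (C : Fin n → Con) (νi : Fin n → FDist Con),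
      (∀ i, 0 ≤ p i) ∧ ∑ i, p i = 1 ∧
      (∀ x, μ.toFun x = ∑ i, if C i = x then p i else 0) ∧
      (∀ i, Weak L (pointDist (C i)) (νi i)) ∧
      (∀ x, ν.toFun x = ∑ i, p i * (νi i).toFun x) := by
  cases h with
  | refl C =>
      exact ⟨1, fun _ => 1, fun _ => C, fun _ => pointDist C, by simp, by simp,
        by simp [pointDist, eq_comm], fun _ => Weak.refl C, by simp⟩
  | step ht hw =>
      exact ⟨1, fun _ => 1, fun _ => _, fun _ => _, by simp, by simp,
        by simp [pointDist, eq_comm], fun _ => Weak.step ht hw, by simp⟩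
  | mix p C ν μ ξ hp hs hμ hν hξ => exact ⟨_, p, C, ν, hp, hs, hμ, hν, hξ⟩

end Weak

/-- `⟹` is closed under convex combinations: if `μ_j ⟹ ν_j` for `j` in a finite
index set and `∑ q_j = 1` with `q_j ≥ 0`, then `∑ q_j μ_j ⟹ ∑ q_j ν_j`. -/
theorem weak_convex {Con Act : Type*} [DecidableEq Con] (L : PLTS Con Act)
    {m : ℕ} (q : Fin m → ℝ) (μs νs : Fin m → FDist Con) (μ ν : FDist Con)
    (hq : ∀ j, 0 ≤ q j) (hqs : ∑ j, q j = 1)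
    (h : ∀ j, Weak L (μs j) (νs j))
    (hμ : ∀ x, μ.toFun x = ∑ j, q j * (μs j).toFun x)
    (hν : ∀ x, ν.toFun x = ∑ j, q j * (νs j).toFun x) :
    Weak L μ ν := by
  choose n p C νi hp hps hμi hw hνi using fun j => (h j).exists_point_decomposition
  refine Weak.mix_fintype (ι := Σ j, Fin (n j)) (fun s => q s.1 * p s.1 s.2)
    (fun s => C s.1 s.2) (fun s => νi s.1 s.2) μ ν (fun s => mul_nonneg (hq _) (hp _ _)) ?_ ?_
    (fun s => hw _ _) ?_
  · simp [Fintype.sum_sigma, ← Finset.mul_sum, hps, hqs]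
  · intro x
    simp [Fintype.sum_sigma, hμ, hμi, Finset.mul_sum, mul_ite]
  · intro x
    simp [Fintype.sum_sigma, hν, hνi, Finset.mul_sum, mul_assoc]
end
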